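/- arXiv:2406.06855 — 2 statements merged into one kernel-verified Lean document; each statement's English description precedes it below -/
import Mathlib

section
/- Under the assumptions of the previous statement, the map $\underline{h} : [0,\infty) \to \mathbb{R}^K$ defined by $\underline{h}(0) = 0$ and, for $r > 0$, $\underline{h}(r)$ the unique balanced allocation (i.e., $\sum_l \underline{h}(r)_l = r$, $\underline{h}(r)_l \geq 0$, and $\widetilde{\mu}_l \widetilde{C}_l'(\underline{h}(r)_l/\widetilde{\rho}_l)$ equal across $l$), is continuous on $[0,\infty)$. -/
/-!
The balanced allocation is coordinatewise increasing in the total workload: if `r < r'`, some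
coordinate of `h r'` exceeds that of `h r`, so the common index `μ_l D_l(h_l / ρ_l)` is larger
at `r'`, and by strict monotonicity of the `D_l` so is every coordinate. Nondecreasing
coordinates adding up to `r` are then each `1`-Lipschitz in `r`.
-/

open Set

theorem sub_le_sub_of_monotoneOn_of_sum_eq {ι : Type*} [Fintype ι] {s : Set ℝ}
    {f : ℝ → ι → ℝ} (hmono : ∀ i, MonotoneOn (f · i) s) (hsum : ∀ x ∈ s, ∑ i, f x i = x)
    {x y : ℝ} (hx : x ∈ s) (hy : y ∈ s) (hxy : x ≤ y) (i : ι) :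
    f y i - f x i ≤ y - x :=
  calc f y i - f x i ≤ ∑ j, (f y j - f x j) :=
        Finset.single_le_sum (f := fun j => f y j - f x j)
          (fun j _ => sub_nonneg.2 (hmono j hx hy hxy)) (Finset.mem_univ i)
    _ = y - x := by rw [Finset.sum_sub_distrib, hsum x hx, hsum y hy]

theorem lipschitzOnWith_one_of_monotoneOn_of_sum_eq {ι : Type*} [Fintype ι] {s : Set ℝ}
    {f : ℝ → ι → ℝ} (hmono : ∀ i, MonotoneOn (f · i) s) (hsum : ∀ x ∈ s, ∑ i, f x i = x)
    (i : ι) : LipschitzOnWith 1 (f · i) s := by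
  refine LipschitzOnWith.of_le_add fun x hx y hy => ?_
  rcases le_total x y with hxy | hyx
  · linarith [hmono i hx hy hxy, dist_nonneg (x := x) (y := y)]
  · linarith [sub_le_sub_of_monotoneOn_of_sum_eq hmono hsum hy hx hyx i,
      Real.dist_eq x y ▸ le_abs_self (x - y)]

theorem lt_of_sum_lt_of_level_eq {ι : Type*} [Fintype ι] {s : Set ℝ} {φ : ι → ℝ → ℝ}
    (hφ : ∀ l, StrictMonoOn (φ l) s) {a b : ι → ℝ} (ha : ∀ l, a l ∈ s) (hb : ∀ l, b l ∈ s)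
    (ha_eq : ∀ l m, φ l (a l) = φ m (a m)) (hb_eq : ∀ l m, φ l (b l) = φ m (b m))
    (hab : ∑ l, a l < ∑ l, b l) (l : ι) : a l < b l := by
  obtain ⟨m, -, hm⟩ := Finset.exists_lt_of_sum_lt hab
  have hlevel : φ l (a l) < φ l (b l) := by
    rw [ha_eq l m, hb_eq l m]
    exact hφ m (ha m) (hb m) hm
  exact (hφ l).lt_iff_lt (ha l) (hb l) |>.1 hlevel

theorem strictMonoOn_const_mul_comp_div {D : ℝ → ℝ} (hD : StrictMonoOn D (Ici 0))
    {μ ρ : ℝ} (hμ : 0 < μ) (hρ : 0 < ρ) :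
    StrictMonoOn (fun x => μ * D (x / ρ)) (Ici 0) := fun _ hx _ hy hxy =>
  mul_lt_mul_of_pos_left
    (hD (div_nonneg hx hρ.le) (div_nonneg hy hρ.le) (div_lt_div_of_pos_right hxy hρ)) hμ

theorem stmt1_general (K : ℕ)
    (D : Fin K → ℝ → ℝ)
    (μ ρ : Fin K → ℝ) (hμ : ∀ l, 0 < μ l) (hρ : ∀ l, 0 < ρ l)
    (hDmono : ∀ l, StrictMonoOn (D l) (Set.Ici 0))
    (h : ℝ → Fin K → ℝ)
    (h0 : h 0 = 0)
    (hball : ∀ r : ℝ, 0 < r →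
      (∀ l, 0 ≤ h r l) ∧ (∑ l, h r l = r) ∧
      ∀ l m, μ l * D l (h r l / ρ l) = μ m * D m (h r m / ρ m)) :
    ContinuousOn h (Set.Ici 0) := by
  have hnn : ∀ r ∈ Ici (0 : ℝ), ∀ l, 0 ≤ h r l := by
    rintro r hr l
    rcases (mem_Ici.1 hr).eq_or_lt with rfl | hr
    · simp [h0]
    · exact (hball r hr).1 l
  have hsum : ∀ r ∈ Ici (0 : ℝ), ∑ l, h r l = r := by
    rintro r hr
    rcases (mem_Ici.1 hr).eq_or_lt with rfl | hr
    · simp [h0]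
    · exact (hball r hr).2.1
  have hmono : ∀ l, MonotoneOn (h · l) (Ici 0) := by
    intro l r hr r' hr' hle
    rcases (mem_Ici.1 hr).eq_or_lt with rfl | hr_pos
    · simpa [h0] using hnn r' hr' l
    rcases hle.eq_or_lt with rfl | hlt
    · rfl
    refine (lt_of_sum_lt_of_level_eq (fun l => strictMonoOn_const_mul_comp_div (hDmono l)
      (hμ l) (hρ l)) (hnn r hr) (hnn r' hr') (hball r hr_pos).2.2
      (hball r' (hr_pos.trans hlt)).2.2 ?_ l).le
    rwa [hsum r hr, hsum r' hr']
  exact continuousOn_pi.2 fun l =>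
    (lipschitzOnWith_one_of_monotoneOn_of_sum_eq hmono hsum l).continuousOn

/-- Continuity of the optimal workload allocation map `h` on `[0, ∞)`:
`h 0 = 0` and for `r > 0`, `h r` is the unique balanced allocation (nonnegative,
summing to `r`, with all indices `μ_l C_l'(h(r)_l / ρ_l)` equal). -/
theorem stmt1 (K : ℕ) (hK : 1 ≤ K)
    (C D : Fin K → ℝ → ℝ)
    (μ ρ : Fin K → ℝ) (hμ : ∀ l, 0 < μ l) (hρ : ∀ l, 0 < ρ l)
    (hderiv : ∀ l, ∀ x ∈ Set.Ici (0:ℝ), HasDerivWithinAt (C l) (D l x) (Set.Ici 0) x)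
    (hC0 : ∀ l, C l 0 = 0) (hD0 : ∀ l, D l 0 = 0)
    (hCconv : ∀ l, StrictConvexOn ℝ (Set.Ici 0) (C l))
    (hCnn : ∀ l, ∀ x ∈ Set.Ici (0:ℝ), 0 ≤ C l x)
    (hDmono : ∀ l, StrictMonoOn (D l) (Set.Ici 0))
    (hDcont : ∀ l, ContinuousOn (D l) (Set.Ici 0))
    (hDtop : ∀ l, Filter.Tendsto (D l) Filter.atTop Filter.atTop)
    (h : ℝ → Fin K → ℝ)
    (h0 : h 0 = 0)
    (hball : ∀ r : ℝ, 0 < r →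
      (∀ l, 0 ≤ h r l) ∧ (∑ l, h r l = r) ∧
      ∀ l m, μ l * D l (h r l / ρ l) = μ m * D m (h r m / ρ m)) :
    ContinuousOn h (Set.Ici 0) :=
  stmt1_general K D μ ρ hμ hρ hDmono h h0 hball
end

section
/- Let $f : [0,1] \to \mathbb{R}$ be continuous. Fix $\delta > 0$ and suppose there exist a sequence $\varepsilon_k \downarrow 0$ and points $t_k \in [0, 1-\delta]$ such that $|f(t) - f(t_k)| \leq \varepsilon_k$ for all $t \in [t_k, t_k + \delta]$ and all $k$. Then there exists a nondegenerate closed subinterval $[a,b] \subseteq [0,1]$ with $b - a \geq \delta/2$ on which $f$ is constant. -/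
open Set Filter

/-- Deterministic core of the stopping-time lemma: if a continuous function `f`
on `[0,1]` has oscillation at most `ε_k ↓ 0` on each interval
`[t_k, t_k + δ] ⊆ [0,1]`, then `f` is constant on a closed subinterval of
`[0,1]` of length at least `δ/2`. -/
theorem stmt7 (f : ℝ → ℝ) (hf : ContinuousOn f (Set.Icc 0 1))
    (δ : ℝ) (hδ : 0 < δ)
    (ε : ℕ → ℝ) (hεnn : ∀ k, 0 ≤ ε k)
    (hε : Filter.Tendsto ε Filter.atTop (nhds 0))
    (t : ℕ → ℝ) (ht : ∀ k, t k ∈ Set.Icc 0 (1 - δ))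
    (hosc : ∀ k, ∀ s ∈ Set.Icc (t k) (t k + δ), |f s - f (t k)| ≤ ε k) :
    ∃ a b : ℝ, δ / 2 ≤ b - a ∧ Set.Icc a b ⊆ Set.Icc 0 1 ∧
      ∀ s ∈ Set.Icc a b, f s = f a := by
  obtain ⟨c, hc, φ, hφ, hconv⟩ :=
    (isCompact_Icc (a := (0:ℝ)) (b := 1 - δ)).tendsto_subseq ht
  obtain ⟨hc0, hc1⟩ := hc
  refine ⟨c + δ/4, c + 3*δ/4, by linarith, ?_, ?_⟩
  · intro x hx
    obtain ⟨hx1, hx2⟩ := hx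
    exact ⟨by linarith, by linarith⟩
  · intro s hs
    obtain ⟨hs1, hs2⟩ := hs
    have h0 : Tendsto (fun n => 2 * ε (φ n)) atTop (nhds 0) := by
      have := hε.comp hφ.tendsto_atTop
      simpa using this.const_mul 2
    have hmem : ∀ᶠ n in atTop, t (φ n) ∈ Icc (c - δ/4) (c + δ/4) :=
      hconv (Icc_mem_nhds (by linarith) (by linarith))
    have key : ∀ᶠ n in atTop, |f s - f (c + δ/4)| ≤ 2 * ε (φ n) := by
      filter_upwards [hmem] with n hn
      obtain ⟨hn1, hn2⟩ := hn
      have h1 : |f s - f (t (φ n))| ≤ ε (φ n) :=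
        hosc (φ n) s ⟨by linarith, by linarith⟩
      have h2 : |f (c + δ/4) - f (t (φ n))| ≤ ε (φ n) :=
        hosc (φ n) (c + δ/4) ⟨by linarith, by linarith⟩
      calc |f s - f (c + δ/4)|
          = |(f s - f (t (φ n))) - (f (c + δ/4) - f (t (φ n)))| := by ring_nf
        _ ≤ |f s - f (t (φ n))| + |f (c + δ/4) - f (t (φ n))| := abs_sub _ _
        _ ≤ 2 * ε (φ n) := by linarith
    have : |f s - f (c + δ/4)| ≤ 0 :=
      ge_of_tendsto h0 key
    have := abs_nonpos_iff.mp this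
    linarith [sub_eq_zero.mp this, (sub_eq_zero.mp this).symm.le]
end
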